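/- arXiv:math/0208223 — 3 statements merged into one kernel-verified Lean document; each statement's English description precedes it below -/
import Mathlib

section
/- Let g : ℝⁿ → ℝ be a C² convex symmetric function, λ : ℝ → ℝⁿ a C² curve with pairwise distinct coordinates λ₁(0),...,λₙ(0) at t = 0, and suppose the second derivatives satisfy λ̈ᵢ(0) = -Σ_{j≠i} Qᵢⱼ²/(λⱼ(0) - λᵢ(0)) for some real symmetric matrix Q. Then d²/dt² [g(λ(t))] at t = 0 is ≥ 0. -/
/-!
Let `D` be the differential of `g` at `λ(0)` and `cᵢ = D eᵢ`. By convexity, `g(λ t) - D(λ t)` is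
minimal at `t = 0`, so `(g ∘ λ)''(0) ≥ D(λ̈(0)) = ∑ᵢ cᵢ λ̈ᵢ(0)`. Comparing `g` at `λ(0)` and at
`λ(0)` with two coordinates swapped, convexity and symmetry give
`(cᵢ - cⱼ)(λᵢ(0) - λⱼ(0)) ≥ 0`. Symmetrising the double sum `∑ᵢ cᵢ λ̈ᵢ(0)` in `(i, j)` turns it
into `½ ∑ᵢⱼ Qᵢⱼ² (cᵢ - cⱼ)/(λᵢ(0) - λⱼ(0)) ≥ 0`.
-/

open Finset

theorem IsLocalMin.deriv_deriv_nonneg {f : ℝ → ℝ} {a : ℝ} (hmin : IsLocalMin f a)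
    (hf : ContinuousAt f a) : 0 ≤ deriv (deriv f) a := by
  by_contra! hneg
  have hmax : IsLocalMax f a := isLocalMax_of_deriv_deriv_neg hneg hmin.deriv_eq_zero hf
  have hconst : f =ᶠ[nhds a] fun _ => f a :=
    (hmax.and hmin).mono fun _ h => le_antisymm h.1 h.2
  have hzero : deriv (deriv f) a = 0 := by
    rw [hconst.deriv.deriv_eq]
    simp
  exact hneg.ne hzero

theorem ConvexOn.add_apply_sub_le_of_hasFDerivAt {E : Type*} [NormedAddCommGroup E]
    [NormedSpace ℝ E] {s : Set E} {g : E → ℝ} {D : E →L[ℝ] ℝ} {x y : E} (hg : ConvexOn ℝ s g)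
    (hx : x ∈ s) (hy : y ∈ s) (hD : HasFDerivAt g D x) : g x + D (y - x) ≤ g y := by
  set L : ℝ →ᵃ[ℝ] E := AffineMap.lineMap x y
  have hL0 : L 0 = x := AffineMap.lineMap_apply_zero x y
  have hL1 : L 1 = y := AffineMap.lineMap_apply_one x y
  have hline : ConvexOn ℝ (L ⁻¹' s) (g ∘ L) := hg.comp_affineMap L
  have hderiv : HasDerivAt (g ∘ L) (D (y - x)) 0 :=
    (hL0 ▸ hD).comp_hasDerivAt (0 : ℝ) AffineMap.hasDerivAt_lineMap
  have hslope := hline.le_slope_of_hasDerivAt (x := 0) (y := 1)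
    (by simpa [Set.mem_preimage, hL0]) (by simpa [Set.mem_preimage, hL1]) one_pos hderiv
  rw [slope_def_field, Function.comp_apply, Function.comp_apply, hL0, hL1, sub_zero, div_one]
    at hslope
  linarith

theorem ConvexOn.fderiv_apply_deriv_deriv_le {E : Type*} [NormedAddCommGroup E]
    [NormedSpace ℝ E] {g : E → ℝ} {l : ℝ → E} (hconv : ConvexOn ℝ Set.univ g)
    (hg : ContDiff ℝ 2 g) (hl : ContDiff ℝ 2 l) (t : ℝ) :
    fderiv ℝ g (l t) (deriv (deriv l) t) ≤ deriv (deriv (g ∘ l)) t := by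
  set D := fderiv ℝ g (l t)
  have hgl : ContDiff ℝ 2 (g ∘ l) := hg.comp hl
  have hmin : IsLocalMin (fun s => g (l s) - D (l s)) t := by
    refine Filter.Eventually.of_forall fun s => ?_
    have hsupport := hconv.add_apply_sub_le_of_hasFDerivAt (Set.mem_univ _) (Set.mem_univ (l s))
      (hg.differentiable two_ne_zero (l t)).hasFDerivAt
    rw [map_sub] at hsupport
    linarith
  have hderiv : deriv (fun s => g (l s) - D (l s)) = fun s => deriv (g ∘ l) s - D (deriv l s) :=
    funext fun s => ((hgl.differentiable two_ne_zero s).hasDerivAt.sub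
      (D.hasFDerivAt.comp_hasDerivAt s (hl.differentiable two_ne_zero s).hasDerivAt)).deriv
  have hderiv2 : HasDerivAt (fun s => deriv (g ∘ l) s - D (deriv l s))
      (deriv (deriv (g ∘ l)) t - D (deriv (deriv l) t)) t :=
    (hgl.differentiable_deriv_two t).hasDerivAt.sub
      (D.hasFDerivAt.comp_hasDerivAt t (hl.differentiable_deriv_two t).hasDerivAt)
  have hnonneg := hmin.deriv_deriv_nonneg
    (hgl.continuous.sub (D.continuous.comp hl.continuous)).continuousAt
  rw [hderiv, hderiv2.deriv] at hnonneg
  linarith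

theorem ContinuousLinearMap.apply_eq_sum_mul_apply_single {ι : Type*} [Fintype ι]
    [DecidableEq ι] (D : (ι → ℝ) →L[ℝ] ℝ) (x : ι → ℝ) : D x = ∑ i, x i * D (Pi.single i 1) := by
  conv_lhs => rw [← (Pi.basisFun ℝ ι).sum_repr x]
  simp [map_sum]

theorem ConvexOn.sub_mul_sub_nonneg_of_comp_perm {ι : Type*} [Fintype ι] [DecidableEq ι]
    {g : (ι → ℝ) → ℝ} {D : (ι → ℝ) →L[ℝ] ℝ} {x : ι → ℝ} (hconv : ConvexOn ℝ Set.univ g)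
    (hsymm : ∀ (σ : Equiv.Perm ι) (y : ι → ℝ), g (y ∘ σ) = g y) (hD : HasFDerivAt g D x)
    (i j : ι) : 0 ≤ (D (Pi.single i 1) - D (Pi.single j 1)) * (x i - x j) := by
  have hswap : x ∘ Equiv.swap i j - x = (x j - x i) • (Pi.single i 1 - Pi.single j 1) := by
    ext k
    rcases eq_or_ne k i with rfl | hki
    · rcases eq_or_ne k j with rfl | hkj <;> simp [*]
    rcases eq_or_ne k j with rfl | hkj
    · simp [hki]
    · simp [Equiv.swap_apply_of_ne_of_ne hki hkj, hki, hkj]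
  have hsupport := hconv.add_apply_sub_le_of_hasFDerivAt (Set.mem_univ x)
    (Set.mem_univ (x ∘ Equiv.swap i j)) hD
  rw [hsymm, hswap, map_smul, map_sub, smul_eq_mul] at hsupport
  nlinarith

theorem sum_mul_neg_sum_sq_div_sub_nonneg {ι : Type*} [Fintype ι] [DecidableEq ι]
    (c x : ι → ℝ) (Q : Matrix ι ι ℝ) (hQ : Q.IsSymm)
    (hcx : ∀ i j, 0 ≤ (c i - c j) * (x i - x j)) :
    0 ≤ ∑ i, c i * -∑ j ∈ univ \ {i}, Q i j ^ 2 / (x j - x i) := by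
  have hdiag : ∀ i, ∑ j ∈ univ \ {i}, Q i j ^ 2 / (x j - x i) = ∑ j, Q i j ^ 2 / (x j - x i) :=
    fun i => sum_subset sdiff_subset fun j _ hj => by simp [show j = i by simpa using hj]
  have hterm : ∀ i j, c i * (Q i j ^ 2 / (x i - x j)) + c j * (Q j i ^ 2 / (x j - x i)) =
      Q i j ^ 2 * ((c i - c j) / (x i - x j)) := by
    intro i j
    rw [hQ.apply i j, ← neg_sub (x i), div_neg]
    ring
  -- Pairs with `x i = x j`, including `i = j`, contribute `0` because `a / 0 = 0`.
  have hpair : ∀ i j, 0 ≤ (c i - c j) / (x i - x j) := fun i j => by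
    rcases eq_or_ne (x i - x j) 0 with h | h
    · simp [h]
    · have := div_nonneg (hcx i j) (sq_nonneg (x i - x j))
      rwa [pow_two, ← div_div, mul_div_cancel_right₀ _ h] at this
  calc (0 : ℝ) ≤ (∑ i, ∑ j, Q i j ^ 2 * ((c i - c j) / (x i - x j))) / 2 :=
        div_nonneg (sum_nonneg fun i _ => sum_nonneg fun j _ =>
          mul_nonneg (sq_nonneg _) (hpair i j)) zero_le_two
    _ = ∑ i, c i * -∑ j ∈ univ \ {i}, Q i j ^ 2 / (x j - x i) := by
        simp_rw [← hterm, sum_add_distrib]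
        rw [sum_comm (f := fun i j => c j * _)]
        simp_rw [hdiag, mul_neg, mul_sum, ← sum_neg_distrib, ← mul_neg, ← div_neg, neg_sub]
        ring

theorem stmt14_general (n : ℕ) (g : (Fin n → ℝ) → ℝ)
    (hC2 : ContDiff ℝ 2 g)
    (hconv : ConvexOn ℝ Set.univ g)
    (hsymm : ∀ (σ : Equiv.Perm (Fin n)) (x : Fin n → ℝ), g (x ∘ σ) = g x)
    (l : ℝ → Fin n → ℝ)
    (hlC2 : ∀ i, ContDiff ℝ 2 (fun t => l t i))
    (Q : Matrix (Fin n) (Fin n) ℝ) (hQ : Q.IsSymm)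
    (hsecond : ∀ i, deriv (deriv (fun t => l t i)) 0 =
      -∑ j ∈ univ \ {i}, Q i j ^ 2 / (l 0 j - l 0 i)) :
    0 ≤ deriv (deriv (fun t => g (l t))) 0 := by
  have hl : ContDiff ℝ 2 l := contDiff_pi.mpr hlC2
  set D := fderiv ℝ g (l 0)
  have hl'' : deriv (deriv l) 0 = fun i => deriv (deriv (fun t => l t i)) 0 := by
    have hl' : deriv l = fun t i => deriv (fun s => l s i) t := funext fun t =>
      deriv_pi fun i => (hlC2 i).differentiable two_ne_zero t
    rw [hl', deriv_pi fun i => (hlC2 i).differentiable_deriv_two 0]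
  have hgrad := hconv.sub_mul_sub_nonneg_of_comp_perm hsymm
    (hC2.differentiable two_ne_zero (l 0)).hasFDerivAt
  calc (0 : ℝ) ≤ ∑ i, D (Pi.single i 1) * -∑ j ∈ univ \ {i}, Q i j ^ 2 / (l 0 j - l 0 i) :=
        sum_mul_neg_sum_sq_div_sub_nonneg _ _ Q hQ hgrad
    _ = D (deriv (deriv l) 0) := by
        rw [ContinuousLinearMap.apply_eq_sum_mul_apply_single, hl'']
        simp only [hsecond, mul_comm]
    _ ≤ deriv (deriv (fun t => g (l t))) 0 := hconv.fderiv_apply_deriv_deriv_le hC2 hl 0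

theorem stmt14 (n : ℕ) (g : (Fin n → ℝ) → ℝ)
    (hC2 : ContDiff ℝ 2 g)
    (hconv : ConvexOn ℝ Set.univ g)
    (hsymm : ∀ (σ : Equiv.Perm (Fin n)) (x : Fin n → ℝ), g (x ∘ σ) = g x)
    (l : ℝ → Fin n → ℝ)
    (hlC2 : ∀ i, ContDiff ℝ 2 (fun t => l t i))
    (hdistinct : Function.Injective (l 0))
    (Q : Matrix (Fin n) (Fin n) ℝ) (hQ : Q.IsSymm)
    (hsecond : ∀ i, deriv (deriv (fun t => l t i)) 0 =
      -∑ j ∈ univ \ {i}, Q i j ^ 2 / (l 0 j - l 0 i)) :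
    0 ≤ deriv (deriv (fun t => g (l t))) 0 :=
  stmt14_general n g hC2 hconv hsymm l hlC2 Q hQ hsecond
end

section
/- (Davis's theorem, smooth case) Let g : ℝⁿ → ℝ be a C², convex, symmetric function, and define f on n×n real symmetric matrices by f(M) = g(λ₁(M),...,λₙ(M)) where λᵢ(M) are the eigenvalues of M (in any order). Then f is convex on the space of symmetric matrices. -/
/-!
Let `U` be an orthogonal matrix diagonalizing `M = a • A + b • B`. Then
`λ(M) = diag (Uᵀ M U) = a • diag (Uᵀ A U) + b • diag (Uᵀ B U)`, so by convexity of `g` it suffices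
that `g (diag (Uᵀ A U)) ≤ g (λ(A))`. Writing `A = W diag(λ(A)) Wᵀ` and `V = Uᵀ W`, one has
`diag (Uᵀ A U) = S λ(A)` with `S i j = V i j ^ 2` doubly stochastic (Schur). By Birkhoff's theorem
`S` is a convex combination of permutation matrices, and convexity plus permutation invariance of
`g` give the inequality.
-/

open Matrix

section
variable {ι : Type*} [Fintype ι] [DecidableEq ι]

theorem ConvexOn.apply_mulVec_le_of_mem_doublyStochastic {g : (ι → ℝ) → ℝ}
    (hconv : ConvexOn ℝ Set.univ g) (hsymm : ∀ (σ : Equiv.Perm ι) (x : ι → ℝ), g (x ∘ σ) = g x)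
    {C : Matrix ι ι ℝ} (hC : C ∈ doublyStochastic ℝ ι) (x : ι → ℝ) :
    g (C *ᵥ x) ≤ g x := by
  obtain ⟨w, hw0, hw1, rfl⟩ := exists_eq_sum_perm_of_mem_doublyStochastic hC
  simp only [sum_mulVec, smul_mulVec, permMatrix_mulVec]
  calc g (∑ σ, w σ • (x ∘ σ)) ≤ ∑ σ, w σ * g (x ∘ σ) :=
        hconv.map_sum_le (fun σ _ => hw0 σ) hw1 (fun σ _ => Set.mem_univ _)
    _ = g x := by simp only [hsymm, ← Finset.sum_mul, hw1, one_mul]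

namespace Matrix

theorem map_sq_mem_doublyStochastic_of_mem_unitaryGroup {V : Matrix ι ι ℝ}
    (hV : V ∈ unitaryGroup ι ℝ) : V.map (· ^ 2) ∈ doublyStochastic ℝ ι := by
  have hrow := congr_fun₂ (mem_unitaryGroup_iff.mp hV)
  have hcol := congr_fun₂ (mem_unitaryGroup_iff'.mp hV)
  refine mem_doublyStochastic_iff_sum.mpr ⟨fun i j => sq_nonneg _, fun i => ?_, fun j => ?_⟩
  · simpa [mul_apply, sq] using hrow i i
  · simpa [mul_apply, sq] using hcol j j

theorem diag_mul_diagonal_mul_transpose {R : Type*} [CommSemiring R] (V : Matrix ι ι R)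
    (d : ι → R) : (V * diagonal d * Vᵀ).diag = V.map (· ^ 2) *ᵥ d := by
  ext i
  simp only [diag_apply, mul_apply, diagonal_apply, transpose_apply, mulVec, dotProduct,
    map_apply, mul_ite, mul_zero, Finset.sum_ite_eq', Finset.mem_univ, if_true]
  exact Finset.sum_congr rfl fun j _ => by ring

theorem IsHermitian.apply_diag_conj_le_apply_eigenvalues {g : (ι → ℝ) → ℝ}
    (hconv : ConvexOn ℝ Set.univ g) (hsymm : ∀ (σ : Equiv.Perm ι) (x : ι → ℝ), g (x ∘ σ) = g x)
    {A : Matrix ι ι ℝ} (hA : A.IsHermitian) (U : unitaryGroup ι ℝ) :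
    g (star (U : Matrix ι ι ℝ) * A * U).diag ≤ g hA.eigenvalues := by
  set V : Matrix ι ι ℝ := star (U : Matrix ι ι ℝ) * hA.eigenvectorUnitary
  have hV : V ∈ unitaryGroup ι ℝ := mul_mem (Unitary.star_mem U.2) hA.eigenvectorUnitary.2
  have hconj : star (U : Matrix ι ι ℝ) * A * U = V * diagonal hA.eigenvalues * Vᵀ := by
    conv_lhs => rw [hA.spectral_theorem]
    simp [V, Matrix.mul_assoc, Matrix.star_eq_conjTranspose]
  rw [hconj, diag_mul_diagonal_mul_transpose]
  exact hconv.apply_mulVec_le_of_mem_doublyStochastic hsymm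
    (map_sq_mem_doublyStochastic_of_mem_unitaryGroup hV) _

theorem IsHermitian.eigenvalues_eq_diag_conj {A : Matrix ι ι ℝ} (hA : A.IsHermitian) :
    hA.eigenvalues =
      (star (hA.eigenvectorUnitary : Matrix ι ι ℝ) * A * hA.eigenvectorUnitary).diag := by
  have h := hA.conjStarAlgAut_star_eigenvectorUnitary
  rw [Unitary.conjStarAlgAut_star_apply] at h
  ext i
  simp [h]

end Matrix

end

theorem stmt17_general (n : ℕ) (g : (Fin n → ℝ) → ℝ)
    (hconv : ConvexOn ℝ Set.univ g)
    (hsymm : ∀ (σ : Equiv.Perm (Fin n)) (x : Fin n → ℝ), g (x ∘ σ) = g x)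
    (f : Matrix (Fin n) (Fin n) ℝ → ℝ)
    (hf : ∀ (M : Matrix (Fin n) (Fin n) ℝ) (hM : M.IsHermitian),
      f M = g hM.eigenvalues) :
    ConvexOn ℝ {M : Matrix (Fin n) (Fin n) ℝ | M.IsHermitian} f := by
  have hcomb {A B : Matrix (Fin n) (Fin n) ℝ} (hA : A.IsHermitian) (hB : B.IsHermitian)
      (a b : ℝ) : (a • A + b • B).IsHermitian :=
    (hA.smul (IsSelfAdjoint.all a)).add (hB.smul (IsSelfAdjoint.all b))
  refine ⟨fun A hA B hB a b _ _ _ => hcomb hA hB a b, fun A hA B hB a b ha hb hab => ?_⟩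
  have hM := hcomb hA hB a b
  set U := hM.eigenvectorUnitary
  set dA := (star (U : Matrix (Fin n) (Fin n) ℝ) * A * U).diag
  set dB := (star (U : Matrix (Fin n) (Fin n) ℝ) * B * U).diag
  have hdiag : hM.eigenvalues = a • dA + b • dB := by
    rw [hM.eigenvalues_eq_diag_conj]
    simp only [Matrix.mul_add, Matrix.add_mul, Matrix.mul_smul, Matrix.smul_mul, diag_add,
      diag_smul, dA, dB, U]
  calc f (a • A + b • B) = g (a • dA + b • dB) := by rw [hf _ hM, hdiag]
    _ ≤ a * g dA + b * g dB := hconv.2 (Set.mem_univ _) (Set.mem_univ _) ha hb hab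
    _ ≤ a • f A + b • f B := by
      rw [hf A hA, hf B hB, smul_eq_mul, smul_eq_mul]
      gcongr
      · exact hA.apply_diag_conj_le_apply_eigenvalues hconv hsymm U
      · exact hB.apply_diag_conj_le_apply_eigenvalues hconv hsymm U

theorem stmt17 (n : ℕ) (g : (Fin n → ℝ) → ℝ)
    (hC2 : ContDiff ℝ 2 g)
    (hconv : ConvexOn ℝ Set.univ g)
    (hsymm : ∀ (σ : Equiv.Perm (Fin n)) (x : Fin n → ℝ), g (x ∘ σ) = g x)
    (f : Matrix (Fin n) (Fin n) ℝ → ℝ)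
    (hf : ∀ (M : Matrix (Fin n) (Fin n) ℝ) (hM : M.IsHermitian),
      f M = g hM.eigenvalues) :
    ConvexOn ℝ {M : Matrix (Fin n) (Fin n) ℝ | M.IsHermitian} f :=
  stmt17_general n g hconv hsymm f hf
end

section
/- (Davis's theorem, converse direction) If f is a convex, orthogonally invariant function on n×n real symmetric matrices, then the induced function g(λ) = f(diag(λ)) on ℝⁿ is convex and symmetric. Conversely, if g is convex and symmetric then the orthogonally invariant extension f with f(M) = g(eigenvalues of M) is convex. Hence orthogonally invariant convex functions on symmetric matrices correspond exactly to symmetric convex functions on ℝⁿ. -/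
/-!
Restricting `f` to diagonal matrices is composing it with a linear map, and conjugating
`diagonal l` by a permutation matrix permutes `l`. Conversely, for orthogonal `W` the diagonal of
`Wᵀ * diagonal λ * W` is `S *ᵥ λ` with `S i j = W j i ^ 2` doubly stochastic; by Birkhoff's
theorem it is a convex combination of permutations of `λ`, so `g` of it is at most `g λ`.
Writing the eigenvalues of `a • M + b • N` as the diagonal of its conjugate by its eigenvector
matrix `V` gives `f (a • M + b • N) ≤ a • g (Vᵀ * M * V).diag + b • g (Vᵀ * N * V).diag`, and each
term is bounded by the previous step, since `Uᵀ * M * U = Wᵀ * diagonal λ * W` for `W = Vₘᵀ * U`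
when `M = Vₘ * diagonal λ * Vₘᵀ`.
-/

open Matrix

namespace Matrix

variable {n : Type*}

lemma convex_setOf_isHermitian {𝕜 : Type*} [Field 𝕜] [LinearOrder 𝕜] [IsStrictOrderedRing 𝕜]
    [StarRing 𝕜] [TrivialStar 𝕜] : Convex 𝕜 {M : Matrix n n 𝕜 | M.IsHermitian} :=
  fun _ hM _ hN a b _ _ _ => (hM.smul (IsSelfAdjoint.all a)).add (hN.smul (IsSelfAdjoint.all b))

variable [Fintype n] [DecidableEq n]

section CommRing

variable {R : Type*} [CommRing R]

lemma permMatrix_mul_transpose_permMatrix (σ : Equiv.Perm n) :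
    σ.permMatrix R * (σ.permMatrix R)ᵀ = 1 := by
  simp [← permMatrix_mul]

lemma permMatrix_mul_diagonal_mul_transpose_permMatrix (σ : Equiv.Perm n) (d : n → R) :
    σ.permMatrix R * diagonal d * (σ.permMatrix R)ᵀ = diagonal (d ∘ σ) := by
  rw [transpose_permMatrix, PEquiv.toMatrix_toPEquiv_mul, Equiv.Perm.permMatrix,
    PEquiv.mul_toMatrix_toPEquiv, submatrix_submatrix, Equiv.Perm.inv_def, Equiv.symm_symm]
  exact submatrix_diagonal_equiv d σ

lemma diag_transpose_mul_diagonal_mul (W : Matrix n n R) (d : n → R) :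
    (Wᵀ * diagonal d * W).diag = (of fun i j => W j i ^ 2) *ᵥ d := by
  ext i
  simp only [diag_apply, mul_apply, diagonal_apply, mul_ite, mul_zero, Finset.sum_ite_eq',
    Finset.mem_univ, if_true, transpose_apply, mulVec, dotProduct, of_apply]
  exact Finset.sum_congr rfl fun j _ => by ring

end CommRing

lemma of_sq_mem_doublyStochastic {R : Type*} [CommRing R] [LinearOrder R] [IsStrictOrderedRing R]
    {W : Matrix n n R} (hW : Wᵀ * W = 1) : (of fun i j => W j i ^ 2) ∈ doublyStochastic R n := by
  have hW' : W * Wᵀ = 1 := mul_eq_one_comm.mp hW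
  rw [mem_doublyStochastic_iff_sum]
  refine ⟨fun i j => sq_nonneg _, fun i => ?_, fun j => ?_⟩
  · simpa [mul_apply, sq, one_apply] using congr_fun₂ hW i i
  · simpa [mul_apply, sq, one_apply] using congr_fun₂ hW' j j

namespace IsHermitian

variable {M : Matrix n n ℝ} (hM : M.IsHermitian)

lemma transpose_eigenvectorUnitary_mul :
    (hM.eigenvectorUnitary : Matrix n n ℝ)ᵀ * hM.eigenvectorUnitary = 1 := by
  simpa [star_eq_conjTranspose] using Unitary.coe_star_mul_self hM.eigenvectorUnitary

lemma eq_eigenvectorUnitary_mul_diagonal_mul_transpose :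
    M = hM.eigenvectorUnitary * diagonal hM.eigenvalues *
      (hM.eigenvectorUnitary : Matrix n n ℝ)ᵀ := by
  simpa [star_eq_conjTranspose] using hM.spectral_theorem

lemma transpose_eigenvectorUnitary_mul_mul_eigenvectorUnitary :
    (hM.eigenvectorUnitary : Matrix n n ℝ)ᵀ * M * hM.eigenvectorUnitary =
      diagonal hM.eigenvalues := by
  simpa [star_eq_conjTranspose] using hM.conjStarAlgAut_star_eigenvectorUnitary

end IsHermitian

end Matrix

section SymmetricConvex

variable {n : Type*} [DecidableEq n]

theorem ConvexOn.comp_diagonal {𝕜 : Type*} [Field 𝕜] [LinearOrder 𝕜] [IsStrictOrderedRing 𝕜]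
    [StarRing 𝕜] [TrivialStar 𝕜] {f : Matrix n n 𝕜 → 𝕜}
    (hf : ConvexOn 𝕜 {M | M.IsHermitian} f) : ConvexOn 𝕜 Set.univ (fun d => f (diagonal d)) :=
  (hf.comp_linearMap (diagonalLinearMap n 𝕜 𝕜)).subset (fun d _ => isHermitian_diagonal d)
    convex_univ

variable [Fintype n]

theorem ConvexOn.map_mulVec_le_of_mem_doublyStochastic {𝕜 β : Type*} [Field 𝕜] [LinearOrder 𝕜]
    [IsStrictOrderedRing 𝕜] [AddCommGroup β] [PartialOrder β] [IsOrderedAddMonoid β]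
    [Module 𝕜 β] [IsStrictOrderedModule 𝕜 β] {g : (n → 𝕜) → β} (hg : ConvexOn 𝕜 Set.univ g)
    (hsym : ∀ (σ : Equiv.Perm n) x, g (x ∘ σ) = g x) {S : Matrix n n 𝕜}
    (hS : S ∈ doublyStochastic 𝕜 n) (x : n → 𝕜) : g (S *ᵥ x) ≤ g x := by
  obtain ⟨w, hw₀, hw₁, rfl⟩ := exists_eq_sum_perm_of_mem_doublyStochastic hS
  calc g ((∑ σ, w σ • σ.permMatrix 𝕜) *ᵥ x) = g (∑ σ, w σ • (x ∘ σ)) := by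
        simp [sum_mulVec, smul_mulVec, permMatrix_mulVec]
    _ ≤ ∑ σ, w σ • g (x ∘ σ) :=
        hg.map_sum_le (fun σ _ => hw₀ σ) hw₁ (fun _ _ => Set.mem_univ _)
    _ = g x := by simp [hsym, ← Finset.sum_smul, hw₁]

variable {g : (n → ℝ) → ℝ} (hg : ConvexOn ℝ Set.univ g)
  (hsym : ∀ (σ : Equiv.Perm n) x, g (x ∘ σ) = g x)
include hg hsym

theorem ConvexOn.map_diag_le_map_eigenvalues {U : Matrix n n ℝ} (hU : Uᵀ * U = 1)
    {M : Matrix n n ℝ} (hM : M.IsHermitian) : g (Uᵀ * M * U).diag ≤ g hM.eigenvalues := by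
  set V : Matrix n n ℝ := (hM.eigenvectorUnitary : Matrix n n ℝ)
  have hV : V * Vᵀ = 1 := mul_eq_one_comm.mp hM.transpose_eigenvectorUnitary_mul
  have hW : (Vᵀ * U)ᵀ * (Vᵀ * U) = 1 := by
    simp only [transpose_mul, transpose_transpose, Matrix.mul_assoc, ← Matrix.mul_assoc V, hV,
      Matrix.one_mul, hU]
  have hconj : Uᵀ * M * U = (Vᵀ * U)ᵀ * diagonal hM.eigenvalues * (Vᵀ * U) := by
    conv_lhs => rw [hM.eq_eigenvectorUnitary_mul_diagonal_mul_transpose]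
    simp only [transpose_mul, transpose_transpose, Matrix.mul_assoc, V]
  rw [hconj, diag_transpose_mul_diagonal_mul]
  exact hg.map_mulVec_le_of_mem_doublyStochastic hsym (of_sq_mem_doublyStochastic hW) _

theorem ConvexOn.comp_eigenvalues {f : Matrix n n ℝ → ℝ}
    (hf : ∀ M (hM : M.IsHermitian), f M = g hM.eigenvalues) :
    ConvexOn ℝ {M | M.IsHermitian} f := by
  refine ⟨convex_setOf_isHermitian, fun M hM N hN a b ha hb hab => ?_⟩
  have hC : (a • M + b • N).IsHermitian := convex_setOf_isHermitian hM hN ha hb hab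
  set V : Matrix n n ℝ := (hC.eigenvectorUnitary : Matrix n n ℝ)
  have heig : hC.eigenvalues = a • (Vᵀ * M * V).diag + b • (Vᵀ * N * V).diag := by
    rw [← diag_diagonal hC.eigenvalues,
      ← hC.transpose_eigenvectorUnitary_mul_mul_eigenvectorUnitary]
    simp only [Matrix.mul_add, Matrix.add_mul, Matrix.mul_smul, Matrix.smul_mul, diag_add,
      diag_smul, V]
  calc f (a • M + b • N) = g (a • (Vᵀ * M * V).diag + b • (Vᵀ * N * V).diag) := by
        rw [hf _ hC, heig]
    _ ≤ a • g (Vᵀ * M * V).diag + b • g (Vᵀ * N * V).diag :=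
        hg.2 (Set.mem_univ _) (Set.mem_univ _) ha hb hab
    _ ≤ a • g hM.eigenvalues + b • g hN.eigenvalues := by
        have hVV := hC.transpose_eigenvectorUnitary_mul
        gcongr
        · exact hg.map_diag_le_map_eigenvalues hsym hVV hM
        · exact hg.map_diag_le_map_eigenvalues hsym hVV hN
    _ = a • f M + b • f N := by rw [hf M hM, hf N hN]

end SymmetricConvex

theorem stmt18 (n : ℕ) :
    (∀ f : Matrix (Fin n) (Fin n) ℝ → ℝ,
      (∀ U : Matrix (Fin n) (Fin n) ℝ, Uᵀ * U = 1 →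
        ∀ M : Matrix (Fin n) (Fin n) ℝ, M.IsHermitian → f (Uᵀ * M * U) = f M) →
      ConvexOn ℝ {M : Matrix (Fin n) (Fin n) ℝ | M.IsHermitian} f →
      (ConvexOn ℝ Set.univ (fun l : Fin n → ℝ => f (Matrix.diagonal l)) ∧
        ∀ (σ : Equiv.Perm (Fin n)) (l : Fin n → ℝ),
          f (Matrix.diagonal (l ∘ σ)) = f (Matrix.diagonal l))) ∧
    (∀ g : (Fin n → ℝ) → ℝ,
      ConvexOn ℝ Set.univ g →
      (∀ (σ : Equiv.Perm (Fin n)) (x : Fin n → ℝ), g (x ∘ σ) = g x) →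
      ∀ f : Matrix (Fin n) (Fin n) ℝ → ℝ,
        (∀ (M : Matrix (Fin n) (Fin n) ℝ) (hM : M.IsHermitian),
          f M = g hM.eigenvalues) →
        ConvexOn ℝ {M : Matrix (Fin n) (Fin n) ℝ | M.IsHermitian} f) := by
  refine ⟨fun f hinv hf => ⟨hf.comp_diagonal, fun σ l => ?_⟩,
    fun g hg hsym f hf => hg.comp_eigenvalues hsym hf⟩
  have hP : (σ.permMatrix ℝ)ᵀᵀ * (σ.permMatrix ℝ)ᵀ = 1 := by
    rw [transpose_transpose, permMatrix_mul_transpose_permMatrix]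
  have := hinv _ hP _ (isHermitian_diagonal l)
  rwa [transpose_transpose, permMatrix_mul_diagonal_mul_transpose_permMatrix] at this
end
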